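/- Every instance with two agents admits a (2/3)-MMS allocation, i.e., a complete allocation x with u_i(x_i) ≥ (2/3)·MMS_i for i = 1, 2. -/

import Mathlib

open scoped BigOperators Classical

/-- An instance of fair division with subjective divisibility: `n` agents and `m` goods,
each good of total amount 1.  Each agent `i` assigns a nonnegative value `v i g` to each
good `g` and regards each good as either divisible or indivisible for her. -/
structure FairDivision (n m : ℕ) where
  /-- agent `i`'s value for good `g` -/
  v : Fin n → Fin m → ℝ
  v_nonneg : ∀ i g, 0 ≤ v i g
  /-- `divisible i g` means agent `i` regards good `g` as divisible -/
  divisible : Fin n → Fin m → Prop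

namespace FairDivision

variable {n m : ℕ}

/-- Agent `i`'s utility from receiving fraction `t ∈ [0,1]` of good `g`:
`t * v i g` if `g` is divisible for `i`; `v i g` if `g` is indivisible for `i` and `t = 1`;
and `0` if `g` is indivisible for `i` and `t < 1`. -/
noncomputable def frUtil (I : FairDivision n m) (i : Fin n) (g : Fin m) (t : ℝ) : ℝ :=
  if I.divisible i g then t * I.v i g else if t = 1 then I.v i g else 0

/-- Agent `i`'s (additive) utility for a bundle `b`, given by the fraction `b g` of each good. -/
noncomputable def util (I : FairDivision n m) (i : Fin n) (b : Fin m → ℝ) : ℝ :=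
  ∑ g, I.frUtil i g (b g)

/-- Agent `i`'s utility for the bundle `b` with good `g` omitted. -/
noncomputable def utilMinus (I : FairDivision n m) (i : Fin n) (b : Fin m → ℝ) (g : Fin m) : ℝ :=
  ∑ g' ∈ Finset.univ.erase g, I.frUtil i g' (b g')

/-- A complete allocation: fractions in `[0,1]` summing to `1` for every good. -/
def IsAllocation (I : FairDivision n m) (x : Fin n → Fin m → ℝ) : Prop :=
  (∀ i g, 0 ≤ x i g ∧ x i g ≤ 1) ∧ ∀ g, ∑ i, x i g = 1

/-- A partial allocation: fractions in `[0,1]` summing to at most `1` for every good. -/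
def IsPartialAllocation (I : FairDivision n m) (x : Fin n → Fin m → ℝ) : Prop :=
  (∀ i g, 0 ≤ x i g ∧ x i g ≤ 1) ∧ ∀ g, ∑ i, x i g ≤ 1

/-- The maximin share of agent `i`: the supremum, over all fractional `n`-partitions
`P` of the goods, of the minimum over the parts `P j` of agent `i`'s utility. -/
noncomputable def MMS (I : FairDivision n m) (i : Fin n) : ℝ :=
  sSup { r : ℝ | ∃ P : Fin n → Fin m → ℝ, I.IsAllocation P ∧ r = ⨅ j, I.util i (P j) }

/-- Non-wastefulness: every positive fraction an agent receives yields her positive utility. -/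
def NonWasteful (I : FairDivision n m) (x : Fin n → Fin m → ℝ) : Prop :=
  ∀ i g, 0 < x i g → 0 < I.frUtil i g (x i g)

/-- Envy-freeness. -/
def EF (I : FairDivision n m) (x : Fin n → Fin m → ℝ) : Prop :=
  ∀ i j, I.util i (x j) ≤ I.util i (x i)

/-- Envy-freeness for mixed goods: for all agents `i, j`, if every good `j` receives a
positive fraction of is indivisible for `i`, then `i` does not envy `j` after removing some
such good from `j`'s bundle; otherwise `i` does not envy `j`. -/
def EFM (I : FairDivision n m) (x : Fin n → Fin m → ℝ) : Prop :=
  ∀ i j,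
    ((∀ g, 0 < x j g → ¬ I.divisible i g) →
      ∃ g, 0 < x j g ∧ I.utilMinus i (x j) g ≤ I.util i (x i)) ∧
    ((¬ ∀ g, 0 < x j g → ¬ I.divisible i g) → I.util i (x j) ≤ I.util i (x i))

/-- EFXM: as EFM, but the envy must vanish after removing any positively valued such good. -/
def EFXM (I : FairDivision n m) (x : Fin n → Fin m → ℝ) : Prop :=
  ∀ i j,
    ((∀ g, 0 < x j g → ¬ I.divisible i g) →
      ∀ g, 0 < x j g → 0 < I.v i g → I.utilMinus i (x j) g ≤ I.util i (x i)) ∧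
    ((¬ ∀ g, 0 < x j g → ¬ I.divisible i g) → I.util i (x j) ≤ I.util i (x i))

/-- EF1M: if `j`'s bundle contains (a positive fraction of) some good that `i` regards as
indivisible and values positively, the envy of `i` must vanish after removing some such good;
otherwise `i` does not envy `j`. -/
def EF1M (I : FairDivision n m) (x : Fin n → Fin m → ℝ) : Prop :=
  ∀ i j,
    ((∃ g, 0 < x j g ∧ ¬ I.divisible i g ∧ 0 < I.v i g) →
      ∃ g, 0 < x j g ∧ ¬ I.divisible i g ∧ 0 < I.v i g ∧
        I.utilMinus i (x j) g ≤ I.util i (x i)) ∧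
    ((¬ ∃ g, 0 < x j g ∧ ¬ I.divisible i g ∧ 0 < I.v i g) → I.util i (x j) ≤ I.util i (x i))

/-- Pareto optimality (among complete allocations). -/
def ParetoOptimal (I : FairDivision n m) (x : Fin n → Fin m → ℝ) : Prop :=
  ¬ ∃ y, I.IsAllocation y ∧ (∀ i, I.util i (x i) ≤ I.util i (y i)) ∧
    ∃ i, I.util i (x i) < I.util i (y i)

/-- In a 3-agent instance, `B` (a set of whole goods) is a reducible bundle with respect to
agent `i`: `u_i(B) ≥ (2/3)·MMS_i`, `u_j(M∖B) ≥ 2·MMS_j` for some agent `j ≠ i`, and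
`u_k(M∖B) ≥ (4/3)·MMS_k` for the remaining agent `k`. -/
def IsReducible (I : FairDivision 3 m) (B : Finset (Fin m)) (i : Fin 3) : Prop :=
  2 / 3 * I.MMS i ≤ ∑ g ∈ B, I.v i g ∧
    ∃ j, j ≠ i ∧ 2 * I.MMS j ≤ ∑ g ∈ Bᶜ, I.v j g ∧
      ∀ k, k ≠ i → k ≠ j → 4 / 3 * I.MMS k ≤ ∑ g ∈ Bᶜ, I.v k g

end FairDivision

/-!
Let `Mᵢ` be agent `i`'s value for all goods. Fractional partitions never create value, so
`MMSᵢ ≤ Mᵢ / 2`, and `MMSᵢ ≤ Mᵢ - vᵢ(g)` whenever `g` is indivisible for `i`, since some part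
misses a whole copy of `g`. If agent 0 can cut the goods into two bundles, both worth at least
`r` to her and neither splitting a good that agent 1 treats as indivisible, then agent 1
chooses a bundle worth at least `M₁ / 2 ≥ MMS₁` and agent 0 gets `r`.

If some good that is indivisible for somebody is worth more than `M₀ / 3 ≥ 2/3 · MMS₀` to
agent 0, she cuts it off (when it is indivisible for her, the rest is worth at least `MMS₀`);
if it is divisible for her, it is indivisible for agent 1, who is then content with the rest.
Otherwise agent 0 fills a bundle greedily, splitting only goods that are divisible for both,
until its value lies in `[M₀ / 3, 2 M₀ / 3]`, and cuts there.
-/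

open Finset

section Splitting

variable {ι : Type*}

lemma exists_add_mul_mem_Icc (D : Prop) {t w a c : ℝ} (hwc : ¬ D → w ≤ c)
    (hc : 0 ≤ c) (hta : t < a) (hat : a ≤ t + w) :
    ∃ τ : ℝ, (0 ≤ τ ∧ τ ≤ 1) ∧ (¬ D → τ = 0 ∨ τ = 1) ∧ t + τ * w ∈ Set.Icc a (a + c) := by
  by_cases hD : D
  · have hw' : 0 < w := by linarith
    refine ⟨(a - t) / w, ⟨by positivity, (div_le_one hw').2 (by linarith)⟩,
      fun h => absurd hD h, ?_⟩
    rw [div_mul_cancel₀ _ hw'.ne']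
    constructor <;> linarith
  · exact ⟨1, ⟨zero_le_one, le_rfl⟩, fun _ => Or.inr rfl, by linarith, by linarith [hwc hD]⟩

lemma exists_sum_mul_mem_Icc [DecidableEq ι] (w : ι → ℝ) (D : ι → Prop) {a c : ℝ}
    (hwc : ∀ g, ¬ D g → w g ≤ c) (ha : 0 ≤ a) (hc : 0 ≤ c)
    (s : Finset ι) (hs : a ≤ ∑ g ∈ s, w g) :
    ∃ x : ι → ℝ, (∀ g, 0 ≤ x g ∧ x g ≤ 1) ∧ (∀ g, ¬ D g → x g = 0 ∨ x g = 1) ∧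
      ∑ g ∈ s, x g * w g ∈ Set.Icc a (a + c) := by
  induction s using Finset.induction_on with
  | empty =>
    refine ⟨0, fun _ => ⟨le_rfl, zero_le_one⟩, fun _ _ => Or.inl rfl, ?_⟩
    simp only [sum_empty] at hs ⊢
    constructor <;> linarith
  | @insert g s hg ih =>
    have hsum (x : ι → ℝ) (τ : ℝ) : ∑ g' ∈ insert g s, Function.update x g τ g' * w g' =
        τ * w g + ∑ g' ∈ s, x g' * w g' := by
      rw [sum_insert hg, Function.update_self]
      congr 1
      exact sum_congr rfl fun g' hg' => by rw [Function.update_of_ne (ne_of_mem_of_not_mem hg' hg)]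
    by_cases has : a ≤ ∑ g' ∈ s, w g'
    · obtain ⟨x, hx, hxD, hxs⟩ := ih has
      refine ⟨Function.update x g 0,
        (Function.forall_update_iff x fun _ t => 0 ≤ t ∧ t ≤ 1).2
          ⟨⟨le_rfl, zero_le_one⟩, fun g' _ => hx g'⟩,
        (Function.forall_update_iff x fun g' t => ¬ D g' → t = 0 ∨ t = 1).2
          ⟨fun _ => Or.inl rfl, fun g' _ => hxD g'⟩, ?_⟩
      rwa [hsum, zero_mul, zero_add]
    · rw [sum_insert hg] at hs
      obtain ⟨τ, hτ, hτD, hτs⟩ := exists_add_mul_mem_Icc (D g) (hwc g) hc (not_le.1 has)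
        (by linarith)
      refine ⟨Function.update 1 g τ,
        (Function.forall_update_iff (1 : ι → ℝ) fun _ t => 0 ≤ t ∧ t ≤ 1).2
          ⟨hτ, fun _ _ => ⟨zero_le_one, le_rfl⟩⟩,
        (Function.forall_update_iff (1 : ι → ℝ) fun g' t => ¬ D g' → t = 0 ∨ t = 1).2
          ⟨hτD, fun _ _ _ => Or.inr rfl⟩, ?_⟩
      simpa only [hsum, Pi.one_apply, one_mul, add_comm] using hτs

end Splitting

namespace FairDivision

section Utility

variable {n m : ℕ} (I : FairDivision n m)

def WholeOnIndivisible (i : Fin n) (b : Fin m → ℝ) : Prop :=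
  ∀ g, ¬ I.divisible i g → b g = 0 ∨ b g = 1

variable {I}

lemma WholeOnIndivisible.one_sub {i : Fin n} {b : Fin m → ℝ} (hb : I.WholeOnIndivisible i b) :
    I.WholeOnIndivisible i (1 - b) := fun g hg => by
  rcases hb g hg with h | h <;> simp [h]

variable (I)

lemma wholeOnIndivisible_single (i : Fin n) (g : Fin m) :
    I.WholeOnIndivisible i (Pi.single g 1) := fun g' _ => by
  rcases eq_or_ne g' g with rfl | h <;> simp [*]

variable {i : Fin n} {g : Fin m} {t : ℝ} {b : Fin m → ℝ}

lemma frUtil_nonneg (ht : 0 ≤ t) : 0 ≤ I.frUtil i g t := by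
  unfold frUtil
  split_ifs
  exacts [mul_nonneg ht (I.v_nonneg i g), I.v_nonneg i g, le_rfl]

lemma frUtil_le (ht : t ≤ 1) : I.frUtil i g t ≤ I.v i g := by
  unfold frUtil
  split_ifs
  exacts [mul_le_of_le_one_left (I.v_nonneg i g) ht, le_rfl, I.v_nonneg i g]

lemma frUtil_le_mul (ht : 0 ≤ t) : I.frUtil i g t ≤ t * I.v i g := by
  unfold frUtil
  split_ifs with _ h1
  exacts [le_rfl, by rw [h1, one_mul], mul_nonneg ht (I.v_nonneg i g)]

lemma frUtil_eq_mul (h : I.divisible i g ∨ t = 0 ∨ t = 1) : I.frUtil i g t = t * I.v i g := by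
  unfold frUtil
  rcases h with h | rfl | rfl <;> simp [*]

lemma util_nonneg (hb : ∀ g, 0 ≤ b g) : 0 ≤ I.util i b :=
  sum_nonneg fun g _ => I.frUtil_nonneg (hb g)

lemma util_le_sum_mul (hb : ∀ g, 0 ≤ b g) : I.util i b ≤ ∑ g, b g * I.v i g :=
  sum_le_sum fun g _ => I.frUtil_le_mul (hb g)

lemma util_eq_sum_mul (hb : I.WholeOnIndivisible i b) : I.util i b = ∑ g, b g * I.v i g :=
  sum_congr rfl fun g _ => I.frUtil_eq_mul ((em _).imp_right (hb g))

lemma util_add_util_one_sub (hb : I.WholeOnIndivisible i b) :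
    I.util i b + I.util i (1 - b) = ∑ g, I.v i g := by
  rw [I.util_eq_sum_mul hb, I.util_eq_sum_mul hb.one_sub, ← sum_add_distrib]
  exact sum_congr rfl fun g _ => by simp only [Pi.sub_apply, Pi.one_apply]; ring

lemma util_single : I.util i (Pi.single g 1) = I.v i g := by
  rw [I.util_eq_sum_mul (I.wholeOnIndivisible_single i g)]
  simp [Pi.single_apply]

lemma util_le_sum_sub (hb : ∀ g, b g ≤ 1) (hg : ¬ I.divisible i g) (hbg : b g ≠ 1) :
    I.util i b ≤ ∑ g', I.v i g' - I.v i g := by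
  have hzero : I.frUtil i g (b g) = 0 := by simp [frUtil, hg, hbg]
  rw [util, ← add_sum_erase _ _ (mem_univ g), hzero, zero_add, ← sum_erase_eq_sub (mem_univ g)]
  exact sum_le_sum fun g' _ => I.frUtil_le (hb g')

end Utility

section MaximinShare

variable {n m : ℕ} (I : FairDivision n m) (i : Fin n)

lemma MMS_nonneg : 0 ≤ I.MMS i := by
  refine Real.sSup_nonneg fun r ⟨P, hP, hr⟩ => hr ▸ Real.iInf_nonneg fun j => ?_
  exact I.util_nonneg fun g => (hP.1 j g).1

lemma MMS_le_sum_div [NeZero n] : I.MMS i ≤ (∑ g, I.v i g) / n := by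
  have hn : (0 : ℝ) < n := Nat.cast_pos.2 (Nat.pos_of_neZero n)
  refine Real.sSup_le (fun r ⟨P, hP, hr⟩ => ?_) (div_nonneg (sum_nonneg fun g _ => I.v_nonneg i g) hn.le)
  rw [le_div_iff₀' hn, hr]
  calc (n : ℝ) * ⨅ j, I.util i (P j)
      = (univ : Finset (Fin n)).card • ⨅ j, I.util i (P j) := by simp
    _ ≤ ∑ j, I.util i (P j) :=
        card_nsmul_le_sum _ _ _ fun j _ => ciInf_le (Set.finite_range _).bddBelow j
    _ ≤ ∑ j, ∑ g, P j g * I.v i g := sum_le_sum fun j _ => I.util_le_sum_mul fun g => (hP.1 j g).1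
    _ = ∑ g, I.v i g := by
        rw [sum_comm]
        exact sum_congr rfl fun g _ => by rw [← sum_mul, hP.2 g, one_mul]

lemma MMS_le_sum_sub (hn : 1 < n) {g : Fin m} (hg : ¬ I.divisible i g) :
    I.MMS i ≤ ∑ g', I.v i g' - I.v i g := by
  refine Real.sSup_le (fun r ⟨P, hP, hr⟩ => ?_)
    (sub_nonneg.2 (single_le_sum (fun g' _ => I.v_nonneg i g') (mem_univ g)))
  obtain ⟨j, hj⟩ : ∃ j, P j g ≠ 1 := by
    by_contra! h
    have := hP.2 g
    simp only [h, sum_const, card_univ, Fintype.card_fin, nsmul_eq_mul, mul_one] at this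
    exact hn.ne' (by exact_mod_cast this)
  rw [hr]
  exact (ciInf_le (Set.finite_range _).bddBelow j).trans
    (I.util_le_sum_sub (fun g' => (hP.1 j g').2) hg hj)

end MaximinShare

section TwoAgents

variable {m : ℕ} (I : FairDivision 2 m)

lemma isAllocation_pair {x : Fin m → ℝ} (hx : ∀ g, 0 ≤ x g ∧ x g ≤ 1) :
    I.IsAllocation ![x, 1 - x] := by
  refine ⟨fun i g => ?_, fun g => by simp⟩
  fin_cases i
  · exact hx g
  · simpa using And.symm (hx g)

lemma exists_allocation_of_cut {x : Fin m → ℝ} (hx : ∀ g, 0 ≤ x g ∧ x g ≤ 1)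
    (hx₁ : I.WholeOnIndivisible 1 x) {r : ℝ} (hr : r ≤ I.util 0 x) (hr' : r ≤ I.util 0 (1 - x)) :
    ∃ y, I.IsAllocation y ∧ r ≤ I.util 0 (y 0) ∧ I.MMS 1 ≤ I.util 1 (y 1) := by
  have hchoice := I.util_add_util_one_sub hx₁
  have hMMS : I.MMS 1 ≤ (∑ g, I.v 1 g) / 2 := by exact_mod_cast I.MMS_le_sum_div 1
  rcases le_total (I.util 1 x) (I.util 1 (1 - x)) with h | h
  · exact ⟨![x, 1 - x], I.isAllocation_pair hx, hr, show _ ≤ I.util 1 (1 - x) by linarith⟩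
  · have hswap := I.isAllocation_pair (x := 1 - x) fun g => by simpa using And.symm (hx g)
    rw [sub_sub_cancel] at hswap
    exact ⟨![1 - x, x], hswap, hr', show _ ≤ I.util 1 x by linarith⟩

lemma exists_allocation_of_large_good {g : Fin m} (hg : ¬ (I.divisible 0 g ∧ I.divisible 1 g))
    {r : ℝ} (hv : r ≤ I.v 0 g) (hr : r ≤ I.MMS 0) :
    ∃ y, I.IsAllocation y ∧ r ≤ I.util 0 (y 0) ∧ I.MMS 1 ≤ I.util 1 (y 1) := by
  have hsingle : ∀ g', 0 ≤ (Pi.single g 1 : Fin m → ℝ) g' ∧ (Pi.single g 1 : Fin m → ℝ) g' ≤ 1 :=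
    fun g' => by
      rw [Pi.single_apply]; split_ifs <;> norm_num
  have hrest (i : Fin 2) : I.util i (1 - Pi.single g 1) = ∑ g', I.v i g' - I.v i g := by
    rw [← I.util_add_util_one_sub (I.wholeOnIndivisible_single i g), util_single]; ring
  by_cases h₀ : I.divisible 0 g
  · have h₁ : ¬ I.divisible 1 g := fun h₁ => hg ⟨h₀, h₁⟩
    refine ⟨![Pi.single g 1, 1 - Pi.single g 1], I.isAllocation_pair hsingle, ?_, ?_⟩
    · exact hv.trans_eq I.util_single.symm
    · exact (I.MMS_le_sum_sub 1 one_lt_two h₁).trans_eq (hrest 1).symm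
  · refine I.exists_allocation_of_cut hsingle (I.wholeOnIndivisible_single 1 g)
      (by rwa [util_single]) ?_
    rw [hrest]
    exact hr.trans (I.MMS_le_sum_sub 0 one_lt_two h₀)

lemma exists_allocation_of_small_goods
    (hsmall : ∀ g, ¬ (I.divisible 0 g ∧ I.divisible 1 g) → I.v 0 g ≤ (∑ g', I.v 0 g') / 3) :
    ∃ y, I.IsAllocation y ∧ (∑ g, I.v 0 g) / 3 ≤ I.util 0 (y 0) ∧ I.MMS 1 ≤ I.util 1 (y 1) := by
  have hM : 0 ≤ ∑ g, I.v 0 g := sum_nonneg fun g _ => I.v_nonneg 0 g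
  obtain ⟨x, hx, hxD, hxM⟩ := exists_sum_mul_mem_Icc (I.v 0) _ (a := (∑ g, I.v 0 g) / 3) hsmall
    (by positivity) (by positivity) univ (by linarith)
  have hx₀ : I.WholeOnIndivisible 0 x := fun g hg => hxD g (hg ∘ And.left)
  have hx₁ : I.WholeOnIndivisible 1 x := fun g hg => hxD g (hg ∘ And.right)
  have hchoice := I.util_add_util_one_sub hx₀
  rw [← I.util_eq_sum_mul hx₀] at hxM
  exact I.exists_allocation_of_cut hx hx₁ hxM.1 (by linarith [hxM.2])

end TwoAgents

end FairDivision

/-- Every instance with two agents admits a (2/3)-MMS allocation. -/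
theorem two_agent_two_thirds_mms (m : ℕ) (I : FairDivision 2 m) :
    ∃ x, I.IsAllocation x ∧ ∀ i, 2 / 3 * I.MMS i ≤ I.util i (x i) := by
  obtain ⟨y, hy, hy₀, hy₁⟩ : ∃ y, I.IsAllocation y ∧ 2 / 3 * I.MMS 0 ≤ I.util 0 (y 0) ∧
      I.MMS 1 ≤ I.util 1 (y 1) := by
    have hMMS : I.MMS 0 ≤ (∑ g, I.v 0 g) / 2 := by exact_mod_cast I.MMS_le_sum_div 0
    by_cases hlarge : ∃ g, ¬ (I.divisible 0 g ∧ I.divisible 1 g) ∧ (∑ g', I.v 0 g') / 3 < I.v 0 g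
    · obtain ⟨g, hg, hv⟩ := hlarge
      exact I.exists_allocation_of_large_good hg (by linarith) (by linarith [I.MMS_nonneg 0])
    · obtain ⟨y, hy, hy₀, hy₁⟩ := I.exists_allocation_of_small_goods fun g hg =>
        not_lt.1 fun hv => hlarge ⟨g, hg, hv⟩
      exact ⟨y, hy, by linarith, hy₁⟩
  exact ⟨y, hy, Fin.forall_fin_two.2 ⟨hy₀, by linarith [I.MMS_nonneg 1]⟩⟩
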